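/- Define the lowering operator L = 2 tan(D/2) acting on polynomials, i.e. L p = 2 Σ_{k≥1} θ_{2k-1} (D/2)^{2k-1} p where tan x = Σ_{k≥1} θ_{2k-1} x^{2k-1} is the Taylor series of tangent and D is differentiation (the sum is finite on polynomials). Then L φ̂_n = n φ̂_{n-1} for every n ≥ 1. -/

import Mathlib

open Polynomial

/-- The Taylor coefficients of the tangent: `tan x = Σ_{k≥1} θ_{2k-1} x^{2k-1}` with
`θ_{2k-1} = (-1)^{k-1} 4^k (4^k - 1) B_{2k}/(2k)!`. -/
noncomputable def tanCoeff (k : ℕ) : ℝ :=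
  (-1 : ℝ) ^ (k - 1) * 4 ^ k * (4 ^ k - 1) * ((bernoulli (2 * k) : ℚ) : ℝ) / (Nat.factorial (2 * k))

/-- The lowering operator `L = 2 tan(D/2)`; on a polynomial the tangent series terminates,
so it is given by the finite sum `L p = 2 Σ_k θ_{2k-1} (1/2)^{2k-1} D^{2k-1} p`. -/
noncomputable def lowering (p : Polynomial ℝ) : Polynomial ℝ :=
  ∑ k ∈ Finset.range (p.natDegree + 1),
    (2 * tanCoeff (k + 1) * (1 / 2 : ℝ) ^ (2 * (k + 1) - 1)) •
      derivative^[2 * (k + 1) - 1] p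

/-!
On polynomials, `L = ℓ(D)` for the formal power series `ℓ(t) = 2 tan(t/2)`. Since `D X = X D + 1`,
every `q(D)` satisfies `[q(D), X] = q'(D)`, and the Riccati equation `ℓ' = 1 + ℓ²/4` of the half-angle
tangent turns this into `L (X p) = X L p + p + L² p / 4`. Applying `L` to the three-term recurrence
`φ̂_{n+1} = X φ̂_n - n(n+1)/4 φ̂_{n-1}`, the induction hypotheses `L φ̂_n = n φ̂_{n-1}` and
`L φ̂_{n-1} = (n-1) φ̂_{n-2}` make the `φ̂_{n-2}` terms cancel and leave `(n+1) φ̂_n`.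

The Riccati equation is proved over `ℂ`, where `tan x = -i tanh(ix)` reduces it to the
Bernoulli generating function: `ℓ(t) (e^{it} + 1) = -2i (e^{it} - 1)`.
-/

namespace Polynomial

variable {R : Type*} [CommRing R]

noncomputable def diffOp : R[X] →ₐ[R] Module.End R R[X] :=
  aeval (derivative : Module.End R R[X])

theorem diffOp_apply_X_mul (q p : R[X]) :
    diffOp q (X * p) = X * diffOp q p + diffOp (derivative q) p := by
  induction q using Polynomial.induction_on' with
  | add q r hq hr => simp only [map_add, LinearMap.add_apply, hq, hr, mul_add]; abel
  | monomial n a =>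
    simp only [diffOp, aeval_monomial, derivative_monomial, Module.End.mul_apply,
      Module.End.pow_apply, mul_comm X, iterate_derivative_mul_X, Module.algebraMap_end_apply,
      smul_add, smul_mul_assoc, mul_smul, nsmul_eq_mul, Nat.cast_smul_eq_nsmul]

theorem diffOp_apply_eq_of_coeff_eq {q q' p : R[X]} {N : ℕ}
    (hqq' : ∀ k < N, q.coeff k = q'.coeff k) (hp : p.natDegree < N) :
    diffOp q p = diffOp q' p := by
  obtain ⟨r, hr⟩ : X ^ N ∣ q - q' := X_pow_dvd_iff.mpr fun k hk => by
    rw [coeff_sub, hqq' k hk, sub_self]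
  have hDp : (derivative ^ N : Module.End R R[X]) p = 0 := by
    rw [Module.End.pow_apply]; exact iterate_derivative_eq_zero hp
  rw [← sub_eq_zero, ← LinearMap.sub_apply, ← map_sub, hr, mul_comm, map_mul, diffOp, map_pow,
    aeval_X, Module.End.mul_apply, hDp, map_zero]

-- `diffOp (trunc N g)` realises `g(D)` on polynomials of degree `< N`.
theorem diffOp_trunc_congr (g : PowerSeries R) {p : R[X]} {M N : ℕ}
    (hM : p.natDegree < M) (hN : p.natDegree < N) :
    diffOp (PowerSeries.trunc M g) p = diffOp (PowerSeries.trunc N g) p :=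
  diffOp_apply_eq_of_coeff_eq (N := min M N)
    (fun k hk => by simp [PowerSeries.coeff_trunc, (lt_min_iff.mp hk).1, (lt_min_iff.mp hk).2])
    (lt_min hM hN)

theorem diffOp_trunc_mul_apply (g h : PowerSeries R) {p : R[X]} {N : ℕ} (hp : p.natDegree < N) :
    diffOp (PowerSeries.trunc N (g * h)) p =
      diffOp (PowerSeries.trunc N g) (diffOp (PowerSeries.trunc N h) p) := by
  rw [← PowerSeries.trunc_trunc_mul_trunc, ← Module.End.mul_apply, ← map_mul]
  refine diffOp_apply_eq_of_coeff_eq (fun k hk => ?_) hp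
  rw [PowerSeries.coeff_trunc, if_pos hk, ← coe_mul, coeff_coe]

theorem diffOp_trunc_apply (g : PowerSeries R) (N : ℕ) (p : R[X]) :
    diffOp (PowerSeries.trunc N g) p =
      ∑ i ∈ Finset.range N, PowerSeries.coeff i g • derivative^[i] p := by
  simp only [diffOp, aeval_def, PowerSeries.eval₂_trunc_eq_sum_range, LinearMap.sum_apply,
    Module.End.mul_apply, Module.End.pow_apply, Module.algebraMap_end_apply]

end Polynomial

namespace PowerSeries

theorem map_derivative {R S : Type*} [CommSemiring R] [CommSemiring S] (f : R →+* S)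
    (g : PowerSeries R) : map f (derivative R g) = derivative S (map f g) := by
  ext n
  simp [coeff_derivative]

theorem derivative_rescale {R : Type*} [CommSemiring R] (a : R) (g : PowerSeries R) :
    derivative R (rescale a g) = C a * rescale a (derivative R g) := by
  ext n
  simp only [coeff_derivative, coeff_C_mul, coeff_rescale]
  ring

theorem rescale_bernoulliPowerSeries_mul_exp_sub_one {A : Type*} [CommRing A] [Algebra ℚ A]
    (a : A) : rescale a (bernoulliPowerSeries A) * (rescale a (exp A) - 1) = C a * X := by
  simpa [rescale_X] using congrArg (rescale a) (bernoulliPowerSeries_mul_exp_sub_one A)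

end PowerSeries

theorem Finset.sum_range_two_mul {M : Type*} [AddCommMonoid M] (f : ℕ → M) (n : ℕ) :
    ∑ i ∈ range (2 * n), f i = ∑ k ∈ range n, (f (2 * k) + f (2 * k + 1)) := by
  induction n with
  | zero => simp
  | succ n ih => rw [Nat.mul_succ, sum_range_succ, sum_range_succ, sum_range_succ, ih, add_assoc]

/-- `ℓ(t) = 2 tan(t/2) = Σ_k 2 θ_{2k-1} (t/2)^{2k-1}`. -/
noncomputable def loweringSeries : PowerSeries ℝ :=
  PowerSeries.mk fun n => if Odd n then 2 * tanCoeff ((n + 1) / 2) * (1 / 2) ^ n else 0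

/- Coefficientwise this is the formula for `θ_{2k-1}` with `(-1)^k = i^{2k}`; the term `-2it`
cancels the contribution of `B_1`. -/
open Complex in
theorem X_mul_map_loweringSeries :
    PowerSeries.X * PowerSeries.map ofRealHom loweringSeries =
      PowerSeries.C (-4) * (PowerSeries.rescale (2 * I) (bernoulliPowerSeries ℂ) -
        PowerSeries.rescale I (bernoulliPowerSeries ℂ)) - PowerSeries.C (2 * I) * PowerSeries.X := by
  ext n
  simp only [map_sub, PowerSeries.coeff_C_mul, PowerSeries.coeff_rescale, bernoulliPowerSeries,
    PowerSeries.coeff_mk, PowerSeries.coeff_X]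
  rcases n with _ | _ | m
  · simp
  · simp [loweringSeries]
    ring
  · rw [if_neg (show m + 1 + 1 ≠ 1 by omega), mul_zero, sub_zero, PowerSeries.coeff_succ_X_mul,
      PowerSeries.coeff_map, loweringSeries, PowerSeries.coeff_mk]
    rcases Nat.even_or_odd' m with ⟨j, rfl | rfl⟩
    · rw [if_pos (odd_two_mul_add_one j), show (2 * j + 1 + 1) / 2 = j + 1 by omega,
        show 2 * j + 1 + 1 = 2 * (j + 1) by ring, tanCoeff, show j + 1 - 1 = j by omega]
      have hI : I ^ (2 * (j + 1)) = -(-1) ^ j := by rw [pow_mul, I_sq, pow_succ]; ring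
      have h2I : (2 * I) ^ (2 * (j + 1)) = -4 ^ (j + 1) * (-1) ^ j := by
        rw [mul_pow, hI, pow_mul]; norm_num
      have h4 : (4 : ℂ) ^ (j + 1) = 2 * 2 ^ (2 * j + 1) := by
        rw [pow_succ, pow_succ, pow_mul]; ring
      have h2 : (1 / 2 : ℂ) ^ (2 * j + 1) * 2 ^ (2 * j + 1) = 1 := by
        rw [← mul_pow]; norm_num
      simp only [map_div₀, map_mul, map_sub, map_pow, map_neg, map_one, map_ofNat, map_natCast,
        eq_ratCast, Complex.ofRealHom_eq_coe, Complex.ofReal_ratCast]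
      rw [hI, h2I, h4]
      linear_combination 4 * (-1) ^ j * (2 * 2 ^ (2 * j + 1) - 1) *
        ((_root_.bernoulli (2 * (j + 1)) : ℂ) / ((2 * (j + 1)).factorial : ℂ)) * h2
    · rw [if_neg (Nat.not_odd_iff_even.mpr ⟨j + 1, by ring⟩),
        bernoulli_eq_zero_of_odd ⟨j + 1, by ring⟩ (by omega)]
      simp

open Complex in
theorem map_loweringSeries_mul_exp_add_one :
    PowerSeries.map ofRealHom loweringSeries * (PowerSeries.rescale I (PowerSeries.exp ℂ) + 1) =
      -2 * PowerSeries.C I * (PowerSeries.rescale I (PowerSeries.exp ℂ) - 1) := by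
  have hB₁ := PowerSeries.rescale_bernoulliPowerSeries_mul_exp_sub_one I
  have hB₂ := PowerSeries.rescale_bernoulliPowerSeries_mul_exp_sub_one (2 * I)
  have hX := X_mul_map_loweringSeries
  rw [two_mul] at hB₂ hX
  rw [← PowerSeries.exp_mul_exp_eq_exp_add] at hB₂
  simp only [map_neg, map_add, map_ofNat] at hB₂ hX
  set E := PowerSeries.rescale I (PowerSeries.exp ℂ)
  have hE : E - 1 ≠ 0 := fun h => by
    simpa [E] using congrArg (PowerSeries.coeff 1) h
  have hfactored : PowerSeries.X * (E - 1) *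
      (PowerSeries.map ofRealHom loweringSeries * (E + 1) - -2 * PowerSeries.C I * (E - 1)) = 0 := by
    linear_combination (E ^ 2 - 1) * hX - 4 * hB₂ + 4 * (E + 1) * hB₁
  exact sub_eq_zero.mp ((mul_eq_zero.mp hfactored).resolve_left (mul_ne_zero PowerSeries.X_ne_zero hE))

open Complex in
theorem derivative_map_loweringSeries :
    PowerSeries.derivative ℂ (PowerSeries.map ofRealHom loweringSeries) =
      1 + PowerSeries.C (1 / 4) * PowerSeries.map ofRealHom loweringSeries ^ 2 := by
  have hL := map_loweringSeries_mul_exp_add_one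
  have hdE : PowerSeries.derivative ℂ (PowerSeries.rescale I (PowerSeries.exp ℂ)) =
      PowerSeries.C I * PowerSeries.rescale I (PowerSeries.exp ℂ) := by
    rw [PowerSeries.derivative_rescale, PowerSeries.derivative_exp]
  set E := PowerSeries.rescale I (PowerSeries.exp ℂ)
  set L := PowerSeries.map ofRealHom loweringSeries
  have hdL : PowerSeries.derivative ℂ L * (E + 1) + L * (PowerSeries.C I * E) =
      -2 * PowerSeries.C I * (PowerSeries.C I * E) := by
    have h2 : PowerSeries.derivative ℂ (2 : PowerSeries ℂ) = 0 :=
      mod_cast (PowerSeries.derivative ℂ).map_natCast 2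
    simpa [Derivation.leibniz, hdE, h2, mul_comm] using congrArg (PowerSeries.derivative ℂ) hL
  have hE : E + 1 ≠ 0 := fun h => by
    have h0 := congrArg (PowerSeries.coeff 0) h
    simp only [map_add, PowerSeries.coeff_rescale, PowerSeries.coeff_exp, PowerSeries.coeff_one,
      E] at h0
    norm_num at h0
  have hI : PowerSeries.C I ^ 2 = -1 := by
    rw [← map_pow, I_sq, map_neg, map_one]
  have h4 : 4 * PowerSeries.C (1 / 4 : ℂ) = 1 := by
    rw [← map_ofNat PowerSeries.C 4, ← map_mul]; norm_num
  set i := PowerSeries.C I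
  set c := PowerSeries.C (1 / 4 : ℂ)
  have hfactored : (PowerSeries.derivative ℂ L - (1 + c * L ^ 2)) * (E + 1) ^ 2 = 0 := by
    linear_combination (E + 1) * hdL - i * E * hL - c * (L * (E + 1) + -2 * i * (E - 1)) * hL +
      (-4 * c * (E - 1) ^ 2 + 2 * E * (E - 1) - 2 * E * (E + 1)) * hI + (E - 1) ^ 2 * h4
  exact sub_eq_zero.mp ((mul_eq_zero.mp hfactored).resolve_right (pow_ne_zero 2 hE))

theorem derivative_loweringSeries :
    PowerSeries.derivative ℝ loweringSeries = 1 + PowerSeries.C (1 / 4) * loweringSeries ^ 2 := by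
  refine PowerSeries.map_injective Complex.ofRealHom Complex.ofReal_injective ?_
  rw [PowerSeries.map_derivative, map_add, map_one, map_mul, map_pow, PowerSeries.map_C, map_div₀,
    map_one, map_ofNat]
  exact derivative_map_loweringSeries

theorem lowering_eq_diffOp_trunc {p : ℝ[X]} {N : ℕ} (hp : p.natDegree < N) :
    lowering p = diffOp (PowerSeries.trunc N loweringSeries) p := by
  rw [← diffOp_trunc_congr _ (M := 2 * (p.natDegree + 1)) (by omega) hp, diffOp_trunc_apply,
    Finset.sum_range_two_mul, lowering]
  refine Finset.sum_congr rfl fun k _ => ?_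
  rw [loweringSeries, PowerSeries.coeff_mk, PowerSeries.coeff_mk, if_neg (Nat.not_odd_iff_even.mpr
    (even_two_mul k)), if_pos (odd_two_mul_add_one k), zero_smul, zero_add,
    show (2 * k + 1 + 1) / 2 = k + 1 by omega, show 2 * (k + 1) - 1 = 2 * k + 1 by omega]

theorem natDegree_lowering_le (p : ℝ[X]) : (lowering p).natDegree ≤ p.natDegree :=
  natDegree_sum_le_of_forall_le _ _ fun _ _ =>
    (natDegree_smul_le _ _).trans ((natDegree_iterate_derivative _ _).trans (Nat.sub_le _ _))

theorem lowering_sub (p q : ℝ[X]) : lowering (p - q) = lowering p - lowering q := by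
  rw [lowering_eq_diffOp_trunc (Nat.lt_succ_of_le (natDegree_sub_le p q)),
    lowering_eq_diffOp_trunc (Nat.lt_succ_of_le (le_max_left p.natDegree q.natDegree)),
    lowering_eq_diffOp_trunc (Nat.lt_succ_of_le (le_max_right p.natDegree q.natDegree)), map_sub]

theorem lowering_smul (a : ℝ) (p : ℝ[X]) : lowering (a • p) = a • lowering p := by
  have hlt := Nat.lt_succ_of_le (natDegree_smul_le a p)
  rw [lowering_eq_diffOp_trunc hlt, lowering_eq_diffOp_trunc (Nat.lt_succ_self _), map_smul]

theorem lowering_X_mul (p : ℝ[X]) :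
    lowering (X * p) = X * lowering p + p + (1 / 4 : ℝ) • lowering (lowering p) := by
  set N := p.natDegree + 1
  have hXp : (X * p).natDegree < N + 1 := by
    have := natDegree_mul_le (p := X) (q := p)
    have := natDegree_X_le (R := ℝ)
    omega
  have hLp : (lowering p).natDegree < N := Nat.lt_succ_of_le (natDegree_lowering_le p)
  have hcomm : diffOp (derivative (PowerSeries.trunc (N + 1) loweringSeries)) p =
      p + (1 / 4 : ℝ) • lowering (lowering p) := by
    rw [← PowerSeries.trunc_derivative, derivative_loweringSeries, map_add, PowerSeries.trunc_one,
      PowerSeries.trunc_C_mul, map_add, map_one, LinearMap.add_apply, Module.End.one_apply, sq,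
      ← smul_eq_C_mul, map_smul, LinearMap.smul_apply,
      diffOp_trunc_mul_apply _ _ (Nat.lt_succ_self _), lowering_eq_diffOp_trunc hLp,
      lowering_eq_diffOp_trunc (Nat.lt_succ_self _)]
  rw [lowering_eq_diffOp_trunc hXp, diffOp_apply_X_mul, hcomm,
    ← lowering_eq_diffOp_trunc (show p.natDegree < N + 1 by omega), add_assoc]

theorem lowering_one : lowering 1 = 0 := by
  simp [lowering]

theorem lowering_X : lowering X = 1 := by
  norm_num [lowering, Finset.sum_range_succ, tanCoeff, bernoulli_two, Nat.factorial]

/-- Quasi-monomiality: `L φ̂_n = n φ̂_{n-1}` for `n ≥ 1`. -/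
theorem monicReducedMittagLeffler_lowering (f : ℕ → Polynomial ℝ)
    (h0 : f 0 = 1) (h1 : f 1 = X)
    (hrec : ∀ n : ℕ, 1 ≤ n →
      f (n + 1) = X * f n - C ((n : ℝ) * ((n : ℝ) + 1) / 4) * f (n - 1)) :
    ∀ n : ℕ, 1 ≤ n → lowering (f n) = (n : ℝ) • f (n - 1) := by
  -- At `n = 0` the coefficient vanishes, so the recurrence holds for every `n`.
  have hrec_all : ∀ n : ℕ, f (n + 1) = X * f n - ((n : ℝ) * ((n : ℝ) + 1) / 4) • f (n - 1) := by
    rintro (_ | n)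
    · simp [h0, h1]
    · rw [hrec (n + 1) n.succ_pos, smul_eq_C_mul]
  have hpair : ∀ n : ℕ,
      lowering (f n) = (n : ℝ) • f (n - 1) ∧ lowering (f (n + 1)) = ((n : ℝ) + 1) • f n := by
    intro n
    induction n with
    | zero => simp [h0, h1, lowering_one, lowering_X]
    | succ n ih =>
      refine ⟨by exact_mod_cast ih.2, ?_⟩
      rw [hrec_all (n + 1), Nat.add_sub_cancel, lowering_sub, lowering_smul, lowering_X_mul, ih.2,
        lowering_smul, ih.1, mul_smul_comm, ← eq_sub_iff_add_eq.mp (hrec_all n)]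
      push_cast
      module
  exact fun n _ => (hpair n).1
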